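/- IP-weighted identification for marginal structural models (consequence of equation (B.2.1)): Assume (A1)–(A3). Then for every ā ∈ {0,1}^K: 𝔼[1{Ā(K−1)=ā} · W_sw · Y] = P(Ā(K−1)=ā) · 𝔼[Y^{ā}]. -/

import Mathlib

open MeasureTheory Finset
open scoped Classical

namespace MSMPaper

noncomputable section

variable {Ω : Type*} [MeasurableSpace Ω] {𝓛 : Type*}

/-- Conditional probability `P(E | F) = P(E ∩ F) / P(F)` as a real number
(junk value `0` when `P F = 0`). -/
def cP (P : Measure Ω) (E F : Set Ω) : ℝ := (P (E ∩ F)).toReal / (P F).toReal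

variable {K : ℕ}

/-- Event `Ā(t−1) = b̄` (treatment history up to, not including, time `t`). -/
def Apast (A : Fin K → Ω → Bool) (t : ℕ) (b : Fin K → Bool) : Set Ω :=
  {ω | ∀ k : Fin K, (k : ℕ) < t → A k ω = b k}

/-- Event `L̄(t) = l̄` (covariate history up to and including time `t`). -/
def Lpast (L : Fin K → Ω → 𝓛) (t : ℕ) (l : Fin K → 𝓛) : Set Ω :=
  {ω | ∀ k : Fin K, (k : ℕ) ≤ t → L k ω = l k}

/-- Event `A̲(s, t−1) = b` (treatment history from time `s` up to, not including, `t`). -/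
def Aseg (A : Fin K → Ω → Bool) (s t : ℕ) (b : Fin K → Bool) : Set Ω :=
  {ω | ∀ k : Fin K, s ≤ (k : ℕ) → (k : ℕ) < t → A k ω = b k}

/-- Event `A̲(K−m) = a̲` for a (last-`m`) treatment vector `as`. -/
def EtrV (A : Fin K → Ω → Bool) (m : ℕ) (as : Fin K → Bool) : Set Ω :=
  {ω | ∀ k : Fin K, K - m ≤ (k : ℕ) → A k ω = as k}

/-- Event `A̲(K−m) = a_m` (constant `a` on the last `m` coordinates). -/
def Etr (A : Fin K → Ω → Bool) (m : ℕ) (a : Bool) : Set Ω :=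
  EtrV A m (fun _ => a)

/-- Stabilized weights `W_sw`. -/
def Wsw (P : Measure Ω) (A : Fin K → Ω → Bool) (L : Fin K → Ω → 𝓛) : Ω → ℝ :=
  fun ω => ∏ k : Fin K,
    cP P {ω' | A k ω' = A k ω} (Apast A (k : ℕ) (fun j => A j ω)) /
      cP P {ω' | A k ω' = A k ω}
        (Lpast L (k : ℕ) (fun j => L j ω) ∩ Apast A (k : ℕ) (fun j => A j ω))

/-- Restricted stabilized weights `W_rsw^(m)`. -/
def Wrsw (P : Measure Ω) (A : Fin K → Ω → Bool) (L : Fin K → Ω → 𝓛) (m : ℕ) : Ω → ℝ :=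
  fun ω => ∏ k ∈ Finset.univ.filter (fun k : Fin K => K - m ≤ (k : ℕ)),
    cP P {ω' | A k ω' = A k ω} (Aseg A (K - m) (k : ℕ) (fun j => A j ω)) /
      cP P {ω' | A k ω' = A k ω}
        (Lpast L (k : ℕ) (fun j => L j ω) ∩ Apast A (k : ℕ) (fun j => A j ω))

/-- Partial stabilized weights `W_psw^(m)`. -/
def Wpsw (P : Measure Ω) (A : Fin K → Ω → Bool) (L : Fin K → Ω → 𝓛) (m : ℕ) : Ω → ℝ :=
  fun ω => ∏ k ∈ Finset.univ.filter (fun k : Fin K => K - m ≤ (k : ℕ)),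
    cP P {ω' | A k ω' = A k ω} (Apast A (k : ℕ) (fun j => A j ω)) /
      cP P {ω' | A k ω' = A k ω}
        (Lpast L (k : ℕ) (fun j => L j ω) ∩ Apast A (k : ℕ) (fun j => A j ω))

/-- IP-weighted contrast `θ_W^(m)`. -/
def θW (P : Measure Ω) (A : Fin K → Ω → Bool) (m : ℕ) (W Y : Ω → ℝ) : ℝ :=
  (∫ ω in Etr A m true, W ω * Y ω ∂P) / (∫ ω in Etr A m true, W ω ∂P) -
    (∫ ω in Etr A m false, W ω * Y ω ∂P) / (∫ ω in Etr A m false, W ω ∂P)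

/-- `rev j` is the time index `K − 1 − j`; the paper's coefficient `ψ_{j+1}`
multiplies `a(K − (j+1)) = a(rev j)`. -/
def rev (j : Fin K) : Fin K := ⟨K - 1 - (j : ℕ), by have := j.isLt; omega⟩

/-- `θ^(K) = 𝔼[Y^{1_K}] − 𝔼[Y^{0_K}]`. -/
def θKfull (P : Measure Ω) (Ypot : (Fin K → Bool) → Ω → ℝ) : ℝ :=
  (∫ ω, Ypot (fun _ => true) ω ∂P) - ∫ ω, Ypot (fun _ => false) ω ∂P

/-- (A1) consistency. -/
def A1ok (A : Fin K → Ω → Bool) (Y : Ω → ℝ) (Ypot : (Fin K → Bool) → Ω → ℝ) : Prop :=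
  ∀ (a : Fin K → Bool) (ω : Ω), (∀ k, A k ω = a k) → Y ω = Ypot a ω

/-- (A2) sequential exchangeability. -/
def A2ok (P : Measure Ω) (A : Fin K → Ω → Bool) (L : Fin K → Ω → 𝓛)
    (Ypot : (Fin K → Bool) → Ω → ℝ) : Prop :=
  ∀ (t : Fin K) (a : Fin K → Bool) (B : Set ℝ), MeasurableSet B →
    ∀ (av : Bool) (l : Fin K → 𝓛) (b : Fin K → Bool),
      0 < P (Lpast L (t : ℕ) l ∩ Apast A (t : ℕ) b) →
      cP P ({ω | Ypot a ω ∈ B} ∩ {ω | A t ω = av}) (Lpast L (t : ℕ) l ∩ Apast A (t : ℕ) b) =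
        cP P {ω | Ypot a ω ∈ B} (Lpast L (t : ℕ) l ∩ Apast A (t : ℕ) b) *
          cP P {ω | A t ω = av} (Lpast L (t : ℕ) l ∩ Apast A (t : ℕ) b)

/-- (A3) positivity. -/
def A3ok (P : Measure Ω) (A : Fin K → Ω → Bool) (L : Fin K → Ω → 𝓛) : Prop :=
  ∀ (t : Fin K) (av : Bool) (l : Fin K → 𝓛) (b : Fin K → Bool),
    0 < P (Lpast L (t : ℕ) l ∩ Apast A (t : ℕ) b) →
    0 < cP P {ω | A t ω = av} (Lpast L (t : ℕ) l ∩ Apast A (t : ℕ) b)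

/-- The marginal structural model `𝔼[Y^{ā}] = ψ₀ + Σ_{j=1}^K ψ_j a(K−j)`;
here `ψ j` is the paper's `ψ_{j+1}`, the coefficient of `a(K−1−j)`. -/
def MSMeq (P : Measure Ω) (Ypot : (Fin K → Bool) → Ω → ℝ) (ψ0 : ℝ) (ψ : Fin K → ℝ) : Prop :=
  ∀ a : Fin K → Bool,
    (∫ ω, Ypot a ω ∂P) = ψ0 + ∑ j : Fin K, ψ j * (if a (rev j) = true then 1 else 0)

/-- (A5) conditional MSM given the past treatment history `Ā(K−m−1)`. -/
def A5ok (P : Measure Ω) (A : Fin K → Ω → Bool) (Ypot : (Fin K → Bool) → Ω → ℝ)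
    (m : ℕ) : Prop :=
  ∀ b : Fin K → Bool, 0 < P (Apast A (K - m) b) →
    ∃ (φ0 : ℝ) (φ : Fin K → ℝ), ∀ a : Fin K → Bool,
      (∫ ω in Apast A (K - m) b, Ypot a ω ∂P) / (P (Apast A (K - m) b)).toReal =
        φ0 + ∑ j : Fin K, φ j * (if a (rev j) = true then 1 else 0)

/-- `q_{j+1} = P(A(K−1−j)=1 | A̲(K−m)=1_m) − P(A(K−1−j)=1 | A̲(K−m)=0_m)`. -/
def qcoef (P : Measure Ω) (A : Fin K → Ω → Bool) (m : ℕ) (j : Fin K) : ℝ :=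
  cP P {ω | A (rev j) ω = true} (Etr A m true) -
    cP P {ω | A (rev j) ω = true} (Etr A m false)

end


/-! On the event `Ā(K−1) = ā` the numerators of `W_sw` telescope to `P(Ā(K−1) = ā)`, and the
denominators form the inverse-propensity weight `∏_{k<K} 1 / P(A(k) = a(k) | L̄(k), Ā(k−1) = ā)`.
It remains to show that `∫_{Ā(t−1) = ā} (∏_{k<t} 1/propensity) · Y^ā = 𝔼[Y^ā]` for every `t ≤ K`,
by induction on `t`. On an atom `{L̄(t) = l̄}` the weight is constant, and by sequential
exchangeability, restricting to `A(t) = a(t)` multiplies the integral of `Y^ā` by exactly the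
propensity that the new weight factor divides out. -/

section General

variable {Ω : Type*} [MeasurableSpace Ω] {P : Measure Ω}

theorem setIntegral_eq_sum_setIntegral_fiber {β : Type*} [Fintype β] [MeasurableSpace β]
    [MeasurableSingletonClass β] {H : Ω → β} (hH : Measurable H) {f : Ω → ℝ} {E : Set Ω}
    (hE : MeasurableSet E) (hf : IntegrableOn f E P) :
    ∫ ω in E, f ω ∂P = ∑ b, ∫ ω in H ⁻¹' {b} ∩ E, f ω ∂P := by
  have hcover : (⋃ b, H ⁻¹' {b} ∩ E) = E := by
    rw [← Set.iUnion_inter, ← Set.preimage_iUnion, Set.iUnion_of_singleton, Set.preimage_univ,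
      Set.univ_inter]
  conv_lhs => rw [← hcover]
  refine integral_iUnion_fintype (fun b => (hH (measurableSet_singleton b)).inter hE)
    (fun b c hbc => ?_) (fun b => hf.mono_set Set.inter_subset_right)
  exact ((Set.disjoint_singleton.2 hbc).preimage H).mono Set.inter_subset_left
    Set.inter_subset_left

theorem integrable_comp_finite_mul {β : Type*} [Finite β] [MeasurableSpace β]
    [MeasurableSingletonClass β] {H : Ω → β} (hH : Measurable H) (w : β → ℝ) {g : Ω → ℝ}
    (hg : Integrable g P) : Integrable (fun ω => w (H ω) * g ω) P := by
  have : Fintype β := Fintype.ofFinite β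
  refine hg.bdd_mul (c := ∑ b, ‖w b‖) (Measurable.of_discrete.comp hH).aestronglyMeasurable
    (Filter.Eventually.of_forall fun ω => ?_)
  exact Finset.single_le_sum (f := fun b => ‖w b‖) (fun b _ => norm_nonneg _) (mem_univ _)

theorem setIntegral_inter_eq_cP_mul [IsFiniteMeasure P] {g : Ω → ℝ} (hg : Measurable g)
    {S F : Set Ω} (hFpos : 0 < P F)
    (hindep : ∀ B : Set ℝ, MeasurableSet B →
      cP P (g ⁻¹' B ∩ S) F = cP P (g ⁻¹' B) F * cP P S F) :
    ∫ ω in S ∩ F, g ω ∂P = cP P S F * ∫ ω in F, g ω ∂P := by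
  set c := cP P S F
  have hc : 0 ≤ c := div_nonneg ENNReal.toReal_nonneg ENNReal.toReal_nonneg
  have hF0 : (P F).toReal ≠ 0 := (ENNReal.toReal_pos hFpos.ne' (measure_ne_top P F)).ne'
  have hmap : (P.restrict (S ∩ F)).map g = ENNReal.ofReal c • (P.restrict F).map g := by
    ext B hB
    rw [Measure.map_apply hg hB, Measure.smul_apply, Measure.map_apply hg hB,
      Measure.restrict_apply (hg hB), Measure.restrict_apply (hg hB), smul_eq_mul,
      ← Set.inter_assoc, ← ENNReal.toReal_eq_toReal_iff' (measure_ne_top _ _)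
        (ENNReal.mul_ne_top ENNReal.ofReal_ne_top (measure_ne_top _ _)),
      ENNReal.toReal_mul, ENNReal.toReal_ofReal hc]
    have h := hindep B hB
    rw [cP, cP, div_eq_iff hF0] at h
    rw [h]
    field_simp
  calc ∫ ω in S ∩ F, g ω ∂P
      = ∫ x, x ∂(P.restrict (S ∩ F)).map g :=
        (integral_map hg.aemeasurable aestronglyMeasurable_id).symm
    _ = c * ∫ x, x ∂(P.restrict F).map g := by
        rw [hmap, integral_smul_measure, ENNReal.toReal_ofReal hc, smul_eq_mul]
    _ = c * ∫ ω in F, g ω ∂P :=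
        congrArg (c * ·) (integral_map hg.aemeasurable aestronglyMeasurable_id)

end General

section Identification

variable {Ω : Type*} {𝓛 : Type*} {K : ℕ} {A : Fin K → Ω → Bool} {L : Fin K → Ω → 𝓛}

theorem Apast_zero (A : Fin K → Ω → Bool) (b : Fin K → Bool) : Apast A 0 b = Set.univ := by
  ext ω; simp [Apast]

theorem Apast_succ (A : Fin K → Ω → Bool) {t : ℕ} (ht : t < K) (b : Fin K → Bool) :
    Apast A (t + 1) b = {ω | A ⟨t, ht⟩ ω = b ⟨t, ht⟩} ∩ Apast A t b := by
  ext ω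
  simp only [Apast, Set.mem_inter_iff, Nat.lt_succ_iff_lt_or_eq, or_imp, forall_and]
  constructor
  · rintro ⟨hlt, heq⟩
    exact ⟨heq _ rfl, hlt⟩
  · rintro ⟨heq, hlt⟩
    exact ⟨hlt, fun k hk => (Fin.ext hk : k = ⟨t, ht⟩) ▸ heq⟩

theorem Apast_anti (A : Fin K → Ω → Bool) {s t : ℕ} (hst : s ≤ t) (b : Fin K → Bool) :
    Apast A t b ⊆ Apast A s b :=
  fun _ h k hk => h k (hk.trans_le hst)

theorem filter_val_lt_succ {t : ℕ} (ht : t < K) :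
    univ.filter (fun k : Fin K => (k : ℕ) < t + 1) =
      insert ⟨t, ht⟩ (univ.filter fun k : Fin K => (k : ℕ) < t) := by
  ext k
  simp only [mem_filter, mem_univ, true_and, mem_insert, Fin.ext_iff]
  omega

def Lhist (L : Fin K → Ω → 𝓛) (t : ℕ) (ω : Ω) : {k : Fin K // (k : ℕ) ≤ t} → 𝓛 :=
  fun k => L k ω

theorem Lhist_fiber_eq_empty_or_eq_Lpast (L : Fin K → Ω → 𝓛) (t : ℕ)
    (h : {k : Fin K // (k : ℕ) ≤ t} → 𝓛) :
    Lhist L t ⁻¹' {h} = ∅ ∨ ∃ l, Lhist L t ⁻¹' {h} = Lpast L t l := by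
  rcases (Lhist L t ⁻¹' {h}).eq_empty_or_nonempty with hempty | ⟨ω₀, rfl⟩
  · exact .inl hempty
  · refine .inr ⟨fun j => L j ω₀, ?_⟩
    ext ω
    simp [Lhist, Lpast, funext_iff]

variable [MeasurableSpace Ω] {P : Measure Ω}

theorem measurableSet_Apast (hA : ∀ k, Measurable (A k)) (t : ℕ) (b : Fin K → Bool) :
    MeasurableSet (Apast A t b) := by
  have h : Apast A t b = ⋂ k : Fin K, ⋂ _ : (k : ℕ) < t, A k ⁻¹' {b k} := by
    ext ω; simp [Apast]
  rw [h]
  exact .iInter fun k => .iInter fun _ => hA k (measurableSet_singleton _)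

theorem measurableSet_Lpast [MeasurableSpace 𝓛] [MeasurableSingletonClass 𝓛]
    (hL : ∀ k, Measurable (L k)) (t : ℕ) (l : Fin K → 𝓛) : MeasurableSet (Lpast L t l) := by
  have h : Lpast L t l = ⋂ k : Fin K, ⋂ _ : (k : ℕ) ≤ t, L k ⁻¹' {l k} := by
    ext ω; simp [Lpast]
  rw [h]
  exact .iInter fun k => .iInter fun _ => hL k (measurableSet_singleton _)

theorem prod_cP_Apast [IsProbabilityMeasure P] (A : Fin K → Ω → Bool) (a : Fin K → Bool)
    {t : ℕ} (ht : t ≤ K) (hpos : P (Apast A t a) ≠ 0) :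
    ∏ k ∈ univ.filter (fun k : Fin K => (k : ℕ) < t), cP P {ω | A k ω = a k} (Apast A k a) =
      (P (Apast A t a)).toReal := by
  induction t with
  | zero => simp [Apast_zero]
  | succ t ih =>
    have hpos' : P (Apast A t a) ≠ 0 :=
      fun h => hpos (measure_mono_null (Apast_anti A t.le_succ a) h)
    have hne : (P (Apast A t a)).toReal ≠ 0 :=
      ENNReal.toReal_ne_zero.2 ⟨hpos', measure_ne_top _ _⟩
    rw [filter_val_lt_succ ht, prod_insert (by simp), ih (by omega) hpos', cP,
      ← Apast_succ A ht a]
    field_simp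

noncomputable def propensity (P : Measure Ω) (A : Fin K → Ω → Bool) (L : Fin K → Ω → 𝓛)
    (a : Fin K → Bool) (k : Fin K) (l : Fin K → 𝓛) : ℝ :=
  cP P {ω | A k ω = a k} (Lpast L k l ∩ Apast A k a)

noncomputable def ipWeight (P : Measure Ω) (A : Fin K → Ω → Bool) (L : Fin K → Ω → 𝓛)
    (a : Fin K → Bool) (t : ℕ) (l : Fin K → 𝓛) : ℝ :=
  ∏ k ∈ univ.filter (fun k : Fin K => (k : ℕ) < t), (propensity P A L a k l)⁻¹

theorem ipWeight_zero (a : Fin K → Bool) (l : Fin K → 𝓛) : ipWeight P A L a 0 l = 1 := by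
  simp [ipWeight]

theorem ipWeight_succ (a : Fin K → Bool) {t : ℕ} (ht : t < K) (l : Fin K → 𝓛) :
    ipWeight P A L a (t + 1) l = (propensity P A L a ⟨t, ht⟩ l)⁻¹ * ipWeight P A L a t l := by
  rw [ipWeight, filter_val_lt_succ ht, prod_insert (by simp), ipWeight]

theorem ipWeight_congr (a : Fin K → Bool) {t : ℕ} {l l' : Fin K → 𝓛}
    (h : ∀ k : Fin K, (k : ℕ) < t → l k = l' k) :
    ipWeight P A L a t l = ipWeight P A L a t l' := by
  refine prod_congr rfl fun k hk => ?_
  have hk : (k : ℕ) < t := (mem_filter.1 hk).2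
  have hL : Lpast L k l = Lpast L k l' := by
    ext ω
    refine forall_congr' fun j => forall_congr' fun hj => ?_
    rw [h j (hj.trans_lt hk)]
  rw [propensity, propensity, hL]

theorem Wsw_eq_of_mem_Apast [IsProbabilityMeasure P] {a : Fin K → Bool} {ω : Ω}
    (hω : ω ∈ Apast A K a) (hpos : P (Apast A K a) ≠ 0) :
    Wsw P A L ω = (P (Apast A K a)).toReal * ipWeight P A L a K (fun j => L j ω) := by
  have hωa : ∀ k, A k ω = a k := fun k => hω k k.isLt
  have hall : univ.filter (fun k : Fin K => (k : ℕ) < K) = univ :=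
    filter_true_of_mem fun k _ => k.isLt
  rw [← prod_cP_Apast A a le_rfl hpos, ipWeight, hall, ← prod_mul_distrib]
  simp only [Wsw, hωa, div_eq_mul_inv, propensity]

variable [MeasurableSpace 𝓛] [MeasurableSingletonClass 𝓛]
  (Ypot : (Fin K → Bool) → Ω → ℝ) (a : Fin K → Bool)

theorem setIntegral_Lpast_inter_Apast_succ [IsFiniteMeasure P] (hA : ∀ k, Measurable (A k))
    (hL : ∀ k, Measurable (L k)) (hYpm : Measurable (Ypot a)) (hA2 : A2ok P A L Ypot)
    (hA3 : A3ok P A L) {t : ℕ} (ht : t < K) (l : Fin K → 𝓛) :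
    ∫ ω in Lpast L t l ∩ Apast A (t + 1) a,
        ipWeight P A L a (t + 1) (fun j => L j ω) * Ypot a ω ∂P =
      ∫ ω in Lpast L t l ∩ Apast A t a, ipWeight P A L a t (fun j => L j ω) * Ypot a ω ∂P := by
  have hLm := measurableSet_Lpast hL t l
  have hpull : ∀ s ≤ t + 1, ∀ b : ℕ,
      ∫ ω in Lpast L t l ∩ Apast A b a, ipWeight P A L a s (fun j => L j ω) * Ypot a ω ∂P =
        ipWeight P A L a s l * ∫ ω in Lpast L t l ∩ Apast A b a, Ypot a ω ∂P := by
    intro s hs b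
    rw [← integral_const_mul]
    refine setIntegral_congr_fun (hLm.inter (measurableSet_Apast hA b a)) fun ω hω => ?_
    rw [ipWeight_congr a fun k hk => hω.1 k (by omega)]
  rw [hpull (t + 1) le_rfl, hpull t t.le_succ]
  set F := Lpast L t l ∩ Apast A t a
  rcases eq_zero_or_pos (P F) with hF0 | hFpos
  · have hsucc0 : P (Lpast L t l ∩ Apast A (t + 1) a) = 0 :=
      measure_mono_null (Set.inter_subset_inter_right _ (Apast_anti A t.le_succ a)) hF0
    rw [setIntegral_measure_zero _ hsucc0, setIntegral_measure_zero _ hF0, mul_zero,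
      mul_zero]
  have hevent : Lpast L t l ∩ Apast A (t + 1) a = {ω | A ⟨t, ht⟩ ω = a ⟨t, ht⟩} ∩ F := by
    rw [Apast_succ A ht, Set.inter_left_comm]
  have hfactor : ∫ ω in {ω | A ⟨t, ht⟩ ω = a ⟨t, ht⟩} ∩ F, Ypot a ω ∂P =
      propensity P A L a ⟨t, ht⟩ l * ∫ ω in F, Ypot a ω ∂P :=
    setIntegral_inter_eq_cP_mul hYpm hFpos
      fun B hB => hA2 ⟨t, ht⟩ a B hB (a ⟨t, ht⟩) l a hFpos
  have hprop : propensity P A L a ⟨t, ht⟩ l ≠ 0 := (hA3 ⟨t, ht⟩ (a ⟨t, ht⟩) l a hFpos).ne'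
  rw [hevent, hfactor, ipWeight_succ a ht]
  field_simp

theorem setIntegral_Apast_succ [Fintype 𝓛] [IsFiniteMeasure P] (hA : ∀ k, Measurable (A k))
    (hL : ∀ k, Measurable (L k)) (hYpm : Measurable (Ypot a)) (hYpi : Integrable (Ypot a) P)
    (hA2 : A2ok P A L Ypot) (hA3 : A3ok P A L) {t : ℕ} (ht : t < K) :
    ∫ ω in Apast A (t + 1) a, ipWeight P A L a (t + 1) (fun j => L j ω) * Ypot a ω ∂P =
      ∫ ω in Apast A t a, ipWeight P A L a t (fun j => L j ω) * Ypot a ω ∂P := by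
  have hLhist : Measurable (Lhist L t) := measurable_pi_lambda _ fun k => hL k
  have hint : ∀ s, Integrable (fun ω => ipWeight P A L a s (fun j => L j ω) * Ypot a ω) P :=
    fun s => integrable_comp_finite_mul (measurable_pi_lambda _ hL) (ipWeight P A L a s) hYpi
  rw [setIntegral_eq_sum_setIntegral_fiber hLhist (measurableSet_Apast hA _ a)
      (hint _).integrableOn,
    setIntegral_eq_sum_setIntegral_fiber hLhist (measurableSet_Apast hA _ a)
      (hint _).integrableOn]
  refine sum_congr rfl fun h _ => ?_
  rcases Lhist_fiber_eq_empty_or_eq_Lpast L t h with hempty | ⟨l, hl⟩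
  · simp only [hempty, Set.empty_inter, setIntegral_empty]
  · rw [hl]
    exact setIntegral_Lpast_inter_Apast_succ Ypot a hA hL hYpm hA2 hA3 ht l

theorem setIntegral_Apast_ipWeight_mul [Fintype 𝓛] [IsFiniteMeasure P]
    (hA : ∀ k, Measurable (A k)) (hL : ∀ k, Measurable (L k)) (hYpm : Measurable (Ypot a))
    (hYpi : Integrable (Ypot a) P) (hA2 : A2ok P A L Ypot)
    (hA3 : A3ok P A L) {t : ℕ} (ht : t ≤ K) :
    ∫ ω in Apast A t a, ipWeight P A L a t (fun j => L j ω) * Ypot a ω ∂P = ∫ ω, Ypot a ω ∂P := by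
  induction t with
  | zero => simp [Apast_zero, ipWeight_zero]
  | succ t ih => rw [setIntegral_Apast_succ Ypot a hA hL hYpm hYpi hA2 hA3 ht, ih (by omega)]

end Identification

theorem msm_identification_general
    {Ω : Type*} [MeasurableSpace Ω] {𝓛 : Type*} [MeasurableSpace 𝓛]
    [Fintype 𝓛] [MeasurableSingletonClass 𝓛]
    (P : Measure Ω) [IsProbabilityMeasure P]
    {K : ℕ}
    (A : Fin K → Ω → Bool) (L : Fin K → Ω → 𝓛)
    (hA : ∀ k, Measurable (A k)) (hL : ∀ k, Measurable (L k))
    (Y : Ω → ℝ)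
    (Ypot : (Fin K → Bool) → Ω → ℝ)
    (hYpm : ∀ a, Measurable (Ypot a)) (hYpi : ∀ a, Integrable (Ypot a) P)
    (hA1 : A1ok A Y Ypot) (hA2 : A2ok P A L Ypot) (hA3 : A3ok P A L) :
    ∀ a : Fin K → Bool,
      (∫ ω in Apast A K a, Wsw P A L ω * Y ω ∂P) =
        (P (Apast A K a)).toReal * ∫ ω, Ypot a ω ∂P := by
  intro a
  by_cases hnull : P (Apast A K a) = 0
  · rw [setIntegral_measure_zero _ hnull, hnull, ENNReal.toReal_zero, zero_mul]
  have hintegrand : ∀ ω ∈ Apast A K a, Wsw P A L ω * Y ω =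
      (P (Apast A K a)).toReal * (ipWeight P A L a K (fun j => L j ω) * Ypot a ω) := by
    intro ω hω
    rw [Wsw_eq_of_mem_Apast hω hnull, hA1 a ω fun k => hω k k.isLt, mul_assoc]
  rw [setIntegral_congr_fun (measurableSet_Apast hA K a) hintegrand, integral_const_mul,
    setIntegral_Apast_ipWeight_mul Ypot a hA hL (hYpm a) (hYpi a) hA2 hA3 le_rfl]

/-- IP-weighted identification for MSMs: under (A1)–(A3),
`𝔼[1{Ā(K−1)=ā} W_sw Y] = P(Ā(K−1)=ā) · 𝔼[Y^{ā}]`. -/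
theorem msm_identification
    {Ω : Type*} [MeasurableSpace Ω] {𝓛 : Type*} [MeasurableSpace 𝓛]
    [Fintype 𝓛] [Nonempty 𝓛] [MeasurableSingletonClass 𝓛]
    (P : Measure Ω) [IsProbabilityMeasure P]
    {K : ℕ} (hK : 1 ≤ K)
    (A : Fin K → Ω → Bool) (L : Fin K → Ω → 𝓛)
    (hA : ∀ k, Measurable (A k)) (hL : ∀ k, Measurable (L k))
    (Y : Ω → ℝ) (hY : Measurable Y)
    (Ypot : (Fin K → Bool) → Ω → ℝ)
    (hYpm : ∀ a, Measurable (Ypot a)) (hYpi : ∀ a, Integrable (Ypot a) P)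
    (hA1 : A1ok A Y Ypot) (hA2 : A2ok P A L Ypot) (hA3 : A3ok P A L) :
    ∀ a : Fin K → Bool,
      (∫ ω in Apast A K a, Wsw P A L ω * Y ω ∂P) =
        (P (Apast A K a)).toReal * ∫ ω, Ypot a ω ∂P :=
  msm_identification_general P A L hA hL Y Ypot hYpm hYpi hA1 hA2 hA3

end MSMPaper
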